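/- (Theorem 3, cognitive limits of ideal AI systems.) Let C : ℕ → ℕ → ℕ → Bool be a computable checker that is sound, i.e., for all x n p, C x n p = true implies K x > n. Then there exist x n : ℕ such that K x > n and C x n p = false for every p : ℕ; that is, some true statement of the form 'every algorithm that outputs x has length > n' admits no proof accepted by the checker. -/

import Mathlib

noncomputable def K (x : ℕ) : ℕ :=
  sInf {m : ℕ | ∃ c : Nat.Partrec.Code, Nat.Partrec.Code.encodeCode c = m ∧ c.eval 0 = Part.some x}

/-!
Berry's paradox, made rigorous by Kleene's recursion theorem. Searching through all pairs
`(x, p)` for one with `C x n p = true` and outputting `x` is a partial recursive function of `n`,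
so by the recursion theorem some code `c` computes it at `n = encodeCode c`. If every true
statement `K x > encodeCode c` had an accepted proof, the search would halt with some `y`;
then `c` outputs `y`, so `K y ≤ encodeCode c`, while soundness gives `K y > encodeCode c`.
Such true statements exist because `K` is injective, hence unbounded.
-/

open Nat.Partrec (Code)
open Nat.Partrec.Code

lemma K_le_encodeCode {c : Code} {x : ℕ} (h : c.eval 0 = Part.some x) : K x ≤ encodeCode c :=
  Nat.sInf_le ⟨c, rfl, h⟩

lemma exists_encodeCode_eq_K (x : ℕ) :
    ∃ c : Code, encodeCode c = K x ∧ c.eval 0 = Part.some x := by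
  have hne : {m | ∃ c : Code, encodeCode c = m ∧ c.eval 0 = Part.some x}.Nonempty :=
    ⟨_, Code.const x, rfl, eval_const x 0⟩
  exact Nat.sInf_mem hne

lemma K_injective : Function.Injective K := by
  intro x y hxy
  obtain ⟨c, hc, hcx⟩ := exists_encodeCode_eq_K x
  obtain ⟨d, hd, hdy⟩ := exists_encodeCode_eq_K y
  have hcd : c = d := by
    rw [← encodeCode_eq] at hc hd
    exact Encodable.encode_injective (hc.trans (hxy.trans hd.symm))
  subst hcd
  exact Part.some_injective (hcx.symm.trans hdy)

lemma exists_lt_K (n : ℕ) : ∃ x, n < K x := by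
  obtain ⟨_, ⟨x, rfl⟩, hx⟩ := (Set.infinite_range_of_injective K_injective).exists_gt n
  exact ⟨x, hx⟩

lemma exists_forall_mem_K_le {f : ℕ →. ℕ} (hf : Partrec f) : ∃ n, ∀ y ∈ f n, K y ≤ n := by
  have hf' : Partrec₂ fun (c : Code) (_ : ℕ) => f (encodeCode c) := by
    rw [← encodeCode_eq]
    exact hf.comp (Computable.encode.comp Computable.fst)
  obtain ⟨c, hc⟩ := fixed_point₂ hf'
  refine ⟨encodeCode c, fun y hy => K_le_encodeCode ?_⟩
  rw [hc]
  exact Part.eq_some_iff.2 hy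

def certifiedSearch (C : ℕ → ℕ → ℕ → Bool) (n : ℕ) : Part ℕ :=
  Nat.rfindOpt fun q => bif C q.unpair.1 n q.unpair.2 then some q.unpair.1 else none

lemma partrec_certifiedSearch {C : ℕ → ℕ → ℕ → Bool}
    (hC : Computable (fun q : ℕ × ℕ × ℕ => C q.1 q.2.1 q.2.2)) : Partrec (certifiedSearch C) := by
  have hx : Computable fun a : ℕ × ℕ => a.2.unpair.1 :=
    Computable.fst.comp (Computable.unpair.comp Computable.snd)
  have hp : Computable fun a : ℕ × ℕ => a.2.unpair.2 :=
    Computable.snd.comp (Computable.unpair.comp Computable.snd)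
  have hCq : Computable fun a : ℕ × ℕ => C a.2.unpair.1 a.1 a.2.unpair.2 :=
    (hC.comp (hx.pair (Computable.fst.pair hp))).of_eq fun _ => rfl
  have hstep : Computable₂ fun (n q : ℕ) =>
      bif C q.unpair.1 n q.unpair.2 then some q.unpair.1 else none :=
    Computable.cond hCq (Computable.option_some.comp hx) (Computable.const none)
  exact Partrec.rfindOpt hstep

lemma certifiedSearch_dom {C : ℕ → ℕ → ℕ → Bool} {x n p : ℕ} (h : C x n p = true) :
    (certifiedSearch C n).Dom :=
  Nat.rfindOpt_dom.2 ⟨Nat.pair x p, x, by simp [h]⟩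

lemma exists_eq_true_of_mem_certifiedSearch {C : ℕ → ℕ → ℕ → Bool} {y n : ℕ}
    (h : y ∈ certifiedSearch C n) : ∃ p, C y n p = true := by
  obtain ⟨q, hq⟩ := Nat.rfindOpt_spec h
  cases hCq : C q.unpair.1 n q.unpair.2
  · simp [hCq] at hq
  · simp only [hCq, cond_true, Option.mem_def, Option.some.injEq] at hq
    exact ⟨q.unpair.2, hq ▸ hCq⟩

theorem cognitive_limits_ideal (C : ℕ → ℕ → ℕ → Bool)
    (hC : Computable (fun q : ℕ × ℕ × ℕ => C q.1 q.2.1 q.2.2))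
    (hsound : ∀ x n p : ℕ, C x n p = true → K x > n) :
    ∃ x n : ℕ, K x > n ∧ ∀ p : ℕ, C x n p = false := by
  obtain ⟨n, hn⟩ := exists_forall_mem_K_le (partrec_certifiedSearch hC)
  obtain ⟨x, hx⟩ := exists_lt_K n
  refine ⟨x, n, hx, fun p => Bool.eq_false_iff.2 fun hp => ?_⟩
  have hy := Part.get_mem (certifiedSearch_dom hp)
  obtain ⟨p', hp'⟩ := exists_eq_true_of_mem_certifiedSearch hy
  exact (hsound _ n p' hp').not_ge (hn _ hy)
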